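/- arXiv:1212.1697 — 2 statements merged into one kernel-verified Lean document; each statement's English description precedes it below -/
import Mathlib

section
/- Let 1 < p < ∞, α ∈ (0,1), t > 0, and let v be a weight on ℝⁿ with g(r) := ∫_{|y|<r} v(y)^{−p'} dy finite for every r > 0 and g(t) > 0. Define the test function f(x) := (p'/(1−α)) · g(t)^{−α/p' − 1/p} · v(x)^{−p'} for |x| < t, and f(x) := g(|x|)^{−α/p' − 1/p} · v(x)^{−p'} for |x| > t. Then ‖f‖_{L_{p,v}} = ( ∫_{ℝⁿ} (f(x) v(x))^p dx )^{1/p} ≤ [ (p'/(1−α))^p + 1/(α(p−1)) ]^{1/p} · g(t)^{−α/p'}. -/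
open MeasureTheory Set ENNReal

noncomputable section

abbrev Rn (n : ℕ) := EuclideanSpace ℝ (Fin n)

/-- `gfun p v r = ∫_{|y|<r} v(y)^{-p'} dy` with `p' = p/(p-1)` (Bochner integral). -/
def gfun (n : ℕ) (p : ℝ) (v : Rn n → ℝ) (r : ℝ) : ℝ :=
  ∫ y in {y : Rn n | ‖y‖ < r}, v y ^ (-(p / (p - 1)))

/-- The test function used in the necessity part of the two-weight Hardy criterion:
`f(x) = (p'/(1-α)) g(t)^{-α/p'-1/p} v(x)^{-p'}` if `|x| < t`, and
`f(x) = g(|x|)^{-α/p'-1/p} v(x)^{-p'}` if `|x| ≥ t`. -/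
def testFun (n : ℕ) (p α t : ℝ) (v : Rn n → ℝ) (x : Rn n) : ℝ :=
  if ‖x‖ < t then
    (p / (p - 1) / (1 - α)) * gfun n p v t ^ (-(α / (p / (p - 1))) - 1 / p) * v x ^ (-(p / (p - 1)))
  else
    gfun n p v ‖x‖ ^ (-(α / (p / (p - 1))) - 1 / p) * v x ^ (-(p / (p - 1)))

/-!
Write `σ = v^{-p'} dx`, so that `g(r) = σ(B_r)` and `(f v)^p dx = a(|x|)^p dσ`, where `a` is the
radial factor of `f = a(|x|) v^{-p'}`. On `B_t` the integrand is constant and contributes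
`(p'/(1-α))^p g(t)^{-β}` with `β = α(p-1)`. Outside `B_t` it equals `g(|x|)^{-(β+1)}`.
Spheres are `σ`-null, hence `σ{x : g(|x|) < u} ≤ u` for every `u`, i.e. the law of `g(|x|)`
under `σ` is dominated by Lebesgue measure; the layer-cake formula then bounds the outer part by
`∫_{g(t)}^∞ s^{-(β+1)} ds = g(t)^{-β}/β`.
-/

theorem lintegral_Ioi_ofReal_rpow_neg_inv_sub {β c : ℝ} (hβ : 0 < β) (hc : 0 < c) :
    ∫⁻ s in Ioi (0 : ℝ), ENNReal.ofReal (s ^ (-(β + 1)⁻¹) - c) =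
      ENNReal.ofReal (c ^ (-β) / β) := by
  set γ := (β + 1)⁻¹
  set T := c ^ (-(β + 1))
  have hT : 0 < T := Real.rpow_pos_of_pos hc _
  have hTc : T ^ (-γ) = c := by
    rw [← Real.rpow_mul hc.le, neg_mul_neg, mul_inv_cancel₀ (by positivity), Real.rpow_one]
  have hγ : -γ ≤ 0 := by simp only [γ, neg_nonpos]; positivity
  have hγ1 : -1 < -γ := neg_lt_neg (inv_lt_one_of_one_lt₀ (by linarith))
  have hrpow : IntervalIntegrable (fun s : ℝ => s ^ (-γ)) volume 0 T :=
    intervalIntegral.intervalIntegrable_rpow' hγ1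
  have htail : ∀ s ∈ Ioi T, ENNReal.ofReal (s ^ (-γ) - c) = 0 := fun s hs =>
    ENNReal.ofReal_eq_zero.mpr (by linarith [Real.rpow_le_rpow_of_nonpos hT hs.le hγ])
  have hhead : ∀ᵐ s ∂volume.restrict (Ioc 0 T), 0 ≤ s ^ (-γ) - c := by
    filter_upwards [ae_restrict_mem measurableSet_Ioc] with s hs
    linarith [Real.rpow_le_rpow_of_nonpos hs.1 hs.2 hγ]
  have hval : ∫ s in (0)..T, (s ^ (-γ) - c) = c ^ (-β) / β := by
    rw [intervalIntegral.integral_sub hrpow intervalIntegrable_const, integral_rpow (Or.inl hγ1),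
      intervalIntegral.integral_const, Real.zero_rpow (by linarith : -γ + 1 ≠ 0), smul_eq_mul]
    have hTpow : T ^ (-γ + 1) = c ^ (-β) := by
      rw [← Real.rpow_mul hc.le]
      congr 1
      simp only [γ]
      field_simp
      ring
    have hTmul : (T - 0) * c = c ^ (-β) := by
      rw [sub_zero, ← Real.rpow_add_one hc.ne']
      ring_nf
    have h1γ : -γ + 1 = β / (β + 1) := by simp only [γ]; field_simp; ring
    rw [hTpow, hTmul, h1γ]
    field_simp
    ring
  rw [← Ioc_union_Ioi_eq_Ioi hT.le, lintegral_union measurableSet_Ioi (Ioc_disjoint_Ioi le_rfl),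
    setLIntegral_congr_fun measurableSet_Ioi htail, lintegral_zero, add_zero,
    ← ofReal_integral_eq_lintegral_ofReal (hrpow.sub intervalIntegrable_const).1 hhead,
    ← intervalIntegral.integral_of_le hT.le, hval]

section DistributionBounds

variable {X : Type*} [MeasurableSpace X] {μ : Measure X}

theorem setLIntegral_ofReal_rpow_neg_le {Y : X → ℝ} {A : Set X} {β c : ℝ} (hY : Measurable Y)
    (hA : MeasurableSet A) (hβ : 0 < β) (hc : 0 < c) (hYc : ∀ x ∈ A, c ≤ Y x)
    (hsub : ∀ u, μ (A ∩ {x | Y x < u}) ≤ ENNReal.ofReal (u - c)) :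
    ∫⁻ x in A, ENNReal.ofReal (Y x ^ (-(β + 1))) ∂μ ≤
      ENNReal.ofReal (c ^ (-β) / β) := by
  have hnonneg : ∀ᵐ x ∂μ.restrict A, 0 ≤ Y x ^ (-(β + 1)) :=
    ae_restrict_of_forall_mem hA fun x hx => Real.rpow_nonneg (hc.le.trans (hYc x hx)) _
  rw [lintegral_eq_lintegral_meas_lt _ hnonneg (hY.pow_const _).aemeasurable,
    ← lintegral_Ioi_ofReal_rpow_neg_inv_sub hβ hc]
  refine setLIntegral_mono (by fun_prop) fun s (hs : 0 < s) => ?_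
  rw [Measure.restrict_apply' hA, inter_comm]
  refine (measure_mono ?_).trans (hsub _)
  rintro x ⟨hxA, hx⟩
  refine ⟨hxA, show Y x < _ from lt_of_not_ge fun h => ?_⟩
  have := Real.rpow_le_rpow_of_nonpos (Real.rpow_pos_of_pos hs _) h (by linarith : -(β + 1) ≤ 0)
  rw [← Real.rpow_mul hs.le, neg_mul_neg, inv_mul_cancel₀ (by positivity),
    Real.rpow_one] at this
  exact (lt_of_lt_of_le hx this).false

theorem measure_setOf_measure_lt_lt_le (ρ : X → ℝ) (hnull : ∀ r, μ {x | ρ x = r} = 0)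
    (u : ℝ≥0∞) : μ {x | μ {y | ρ y < ρ x} < u} ≤ u := by
  set D := {r : ℝ | μ {y | ρ y < r} < u}
  have hD : ∀ r ∈ D, ∀ r' ≤ r, r' ∈ D := fun r hr r' hr' =>
    (measure_mono fun y (hy : ρ y < r') => hy.trans_le hr').trans_lt hr
  change μ (ρ ⁻¹' D) ≤ u
  by_cases hmax : ∃ m ∈ D, ∀ r ∈ D, r ≤ m
  · obtain ⟨m, hm, hmax⟩ := hmax
    calc μ (ρ ⁻¹' D) ≤ μ ({y | ρ y < m} ∪ {y | ρ y = m}) :=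
          measure_mono fun x hx => (hmax _ hx).lt_or_eq
      _ ≤ μ {y | ρ y < m} + μ {y | ρ y = m} := measure_union_le _ _
      _ ≤ u := by rw [hnull, add_zero]; exact hm.le
  · push Not at hmax
    calc μ (ρ ⁻¹' D) ≤ μ (⋃ q : {q : ℚ // (q : ℝ) ∈ D}, {y | ρ y < q}) := by
          refine measure_mono fun x hx => ?_
          obtain ⟨r, hr, hxr⟩ := hmax _ hx
          obtain ⟨q, hxq, hqr⟩ := exists_rat_btwn hxr
          exact mem_iUnion.mpr ⟨⟨q, hD r hr q hqr.le⟩, hxq⟩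
      _ = ⨆ q : {q : ℚ // (q : ℝ) ∈ D}, μ {y | ρ y < q} :=
          Directed.measure_iUnion (Monotone.directed_le fun q q' h y (hy : ρ y < q) =>
            show ρ y < q' from hy.trans_le (by exact_mod_cast h))
      _ ≤ u := iSup_le fun q => q.2.le

theorem measure_compl_inter_setOf_measure_lt_le {ρ : X → ℝ} (hρ : Measurable ρ)
    (hnull : ∀ r, μ {x | ρ x = r} = 0) (t : ℝ) (u : ℝ≥0∞) :
    μ ({x | ρ x < t}ᶜ ∩ {x | μ {y | ρ y < ρ x} < u}) ≤ u - μ {x | ρ x < t} := by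
  set B := {x | ρ x < t}
  have hBx : ∀ x ∈ Bᶜ, μ B ≤ μ {y | ρ y < ρ x} := fun x hx =>
    measure_mono fun y (hy : ρ y < t) => hy.trans_le (not_lt.mp hx)
  rcases le_or_gt u (μ B) with hu | hu
  · have hempty : Bᶜ ∩ {x | μ {y | ρ y < ρ x} < u} = ∅ :=
      eq_empty_of_forall_notMem fun x ⟨hxB, hx⟩ => (hu.trans (hBx x hxB)).not_gt hx
    rw [hempty, measure_empty]
    exact zero_le
  refine ENNReal.le_sub_of_add_le_right hu.ne_top ?_
  rw [← measure_union (disjoint_compl_left.mono_left inter_subset_left)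
    (measurableSet_lt hρ measurable_const)]
  refine (measure_mono ?_).trans (measure_setOf_measure_lt_lt_le ρ hnull u)
  rintro x (⟨_, hx⟩ | hx)
  · exact hx
  · exact (measure_mono fun y (hy : ρ y < ρ x) => hy.trans hx).trans_lt hu

end DistributionBounds

def dualWeightMeasure (n : ℕ) (p : ℝ) (v : Rn n → ℝ) : Measure (Rn n) :=
  volume.withDensity fun x => ENNReal.ofReal (v x ^ (-(p / (p - 1))))

section DualWeight

variable {n : ℕ} {p : ℝ} {v : Rn n → ℝ}

theorem gfun_nonneg (hv' : ∀ᵐ x ∂(volume : Measure (Rn n)), 0 < v x) (r : ℝ) :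
    0 ≤ gfun n p v r :=
  integral_nonneg_of_ae (ae_restrict_of_ae (hv'.mono fun _ hx => Real.rpow_nonneg hx.le _))

theorem dualWeightMeasure_ball (hv' : ∀ᵐ x ∂(volume : Measure (Rn n)), 0 < v x)
    (hfin : ∀ r : ℝ, 0 < r →
      IntegrableOn (fun y => v y ^ (-(p / (p - 1)))) {y : Rn n | ‖y‖ < r}) (r : ℝ) :
    dualWeightMeasure n p v {x | ‖x‖ < r} = ENNReal.ofReal (gfun n p v r) := by
  have hint : IntegrableOn (fun y => v y ^ (-(p / (p - 1)))) {y : Rn n | ‖y‖ < r} := by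
    rcases lt_or_ge 0 r with hr | hr
    · exact hfin r hr
    · have hempty : {y : Rn n | ‖y‖ < r} = ∅ :=
        eq_empty_of_forall_notMem fun y (hy : ‖y‖ < r) =>
          (hy.trans_le hr).not_ge (norm_nonneg y)
      rw [hempty]
      exact integrableOn_empty
  rw [dualWeightMeasure, withDensity_apply _ (measurableSet_lt measurable_norm measurable_const),
    gfun, ofReal_integral_eq_lintegral_ofReal hint
      (ae_restrict_of_ae (hv'.mono fun _ hx => Real.rpow_nonneg hx.le _))]

theorem gfun_mono (hv' : ∀ᵐ x ∂(volume : Measure (Rn n)), 0 < v x)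
    (hfin : ∀ r : ℝ, 0 < r →
      IntegrableOn (fun y => v y ^ (-(p / (p - 1)))) {y : Rn n | ‖y‖ < r}) :
    Monotone (gfun n p v) := fun a b hab => by
  rw [← ENNReal.ofReal_le_ofReal_iff (gfun_nonneg hv' b), ← dualWeightMeasure_ball hv' hfin,
    ← dualWeightMeasure_ball hv' hfin]
  exact measure_mono fun x (hx : ‖x‖ < a) => hx.trans_le hab

theorem dualWeightMeasure_sphere (hn : 0 < n) (r : ℝ) :
    dualWeightMeasure n p v {x | ‖x‖ = r} = 0 := by
  have : Nonempty (Fin n) := ⟨⟨0, hn⟩⟩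
  refine withDensity_absolutelyContinuous _ _ ?_
  simpa [Metric.sphere] using Measure.addHaar_sphere volume (0 : Rn n) r

theorem setLIntegral_dualWeightMeasure_gfun_rpow_le (hn : 0 < n)
    (hv' : ∀ᵐ x ∂(volume : Measure (Rn n)), 0 < v x)
    (hfin : ∀ r : ℝ, 0 < r →
      IntegrableOn (fun y => v y ^ (-(p / (p - 1)))) {y : Rn n | ‖y‖ < r})
    {t β : ℝ} (hβ : 0 < β) (hgt : 0 < gfun n p v t) :
    ∫⁻ x in {x | ‖x‖ < t}ᶜ, ENNReal.ofReal (gfun n p v ‖x‖ ^ (-(β + 1)))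
        ∂dualWeightMeasure n p v ≤
      ENNReal.ofReal (gfun n p v t ^ (-β) / β) := by
  have hmono := gfun_mono hv' hfin
  refine setLIntegral_ofReal_rpow_neg_le (hmono.measurable.comp measurable_norm)
    (measurableSet_lt measurable_norm measurable_const).compl hβ hgt
    (fun x hx => hmono (not_lt.mp hx)) fun u => ?_
  have hsub := measure_compl_inter_setOf_measure_lt_le measurable_norm
    (dualWeightMeasure_sphere (p := p) (v := v) hn) t (ENNReal.ofReal u)
  simp_rw [dualWeightMeasure_ball hv' hfin,
    ENNReal.ofReal_lt_ofReal_iff_of_nonneg (gfun_nonneg hv' _)] at hsub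
  rwa [ENNReal.ofReal_sub _ (gfun_nonneg hv' t)]

end DualWeight

theorem ofReal_abs_mul_rpow_neg_conj_mul_rpow {p a w : ℝ} (hp : 1 < p) (hw : 0 < w) :
    ENNReal.ofReal (|a * w ^ (-(p / (p - 1)))| * w) ^ p =
      ENNReal.ofReal (|a| ^ p) * ENNReal.ofReal (w ^ (-(p / (p - 1)))) := by
  have hexp : (-(p / (p - 1)) + 1) * p = -(p / (p - 1)) := by
    field_simp [(by linarith : p - 1 ≠ 0)]
    ring
  rw [abs_mul, abs_of_pos (Real.rpow_pos_of_pos hw _), mul_assoc, ← Real.rpow_add_one hw.ne',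
    ENNReal.ofReal_rpow_of_nonneg (by positivity) (by linarith),
    Real.mul_rpow (abs_nonneg a) (by positivity), ← Real.rpow_mul hw.le, hexp,
    ENNReal.ofReal_mul (by positivity)]

def testExponent (p α : ℝ) : ℝ := -(α / (p / (p - 1))) - 1 / p

theorem testExponent_mul {p : ℝ} (hp : 1 < p) (α : ℝ) :
    testExponent p α * p = -(α * (p - 1) + 1) := by
  rw [testExponent]
  field_simp [(by linarith : p - 1 ≠ 0), (by linarith : p ≠ 0)]
  ring

def testRadial (n : ℕ) (p α t : ℝ) (v : Rn n → ℝ) (r : ℝ) : ℝ :=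
  if r < t then
    (p / (p - 1) / (1 - α)) * gfun n p v t ^ testExponent p α
  else
    gfun n p v r ^ testExponent p α

section TestFunction

variable {n : ℕ} {p α t : ℝ} {v : Rn n → ℝ}

theorem testFun_eq_testRadial_mul (x : Rn n) :
    testFun n p α t v x = testRadial n p α t v ‖x‖ * v x ^ (-(p / (p - 1))) := by
  unfold testFun testRadial
  split_ifs <;> rfl

theorem lintegral_testFun_eq (hp : 1 < p) (hv : Measurable v)
    (hv' : ∀ᵐ x ∂(volume : Measure (Rn n)), 0 < v x) :
    ∫⁻ x, ENNReal.ofReal (|testFun n p α t v x| * v x) ^ p =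
      ∫⁻ x, ENNReal.ofReal (|testRadial n p α t v ‖x‖| ^ p)
        ∂dualWeightMeasure n p v := by
  rw [dualWeightMeasure, lintegral_withDensity_eq_lintegral_mul_non_measurable _
    (hv.pow_const _).ennreal_ofReal (ae_of_all _ fun _ => ofReal_lt_top)]
  refine lintegral_congr_ae (hv'.mono fun x hx => ?_)
  simp only [Pi.mul_apply]
  rw [testFun_eq_testRadial_mul, ofReal_abs_mul_rpow_neg_conj_mul_rpow hp hx, mul_comm]

theorem setLIntegral_lt_testRadial (hp : 1 < p) (hα : α < 1)
    (hv' : ∀ᵐ x ∂(volume : Measure (Rn n)), 0 < v x)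
    (hfin : ∀ r : ℝ, 0 < r →
      IntegrableOn (fun y => v y ^ (-(p / (p - 1)))) {y : Rn n | ‖y‖ < r})
    (hgt : 0 < gfun n p v t) :
    ∫⁻ x in {x | ‖x‖ < t}, ENNReal.ofReal (|testRadial n p α t v ‖x‖| ^ p)
        ∂dualWeightMeasure n p v =
      ENNReal.ofReal ((p / (p - 1) / (1 - α)) ^ p * gfun n p v t ^ (-(α * (p - 1)))) := by
  have hC : 0 < p / (p - 1) / (1 - α) :=
    div_pos (div_pos (by linarith) (by linarith)) (by linarith)
  rw [setLIntegral_congr_fun (measurableSet_lt measurable_norm measurable_const)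
      fun x (hx : ‖x‖ < t) => by rw [testRadial, if_pos hx],
    setLIntegral_const, dualWeightMeasure_ball hv' hfin, ← ENNReal.ofReal_mul (by positivity),
    abs_of_pos (by positivity), Real.mul_rpow hC.le (by positivity), ← Real.rpow_mul hgt.le,
    testExponent_mul hp, mul_assoc, ← Real.rpow_add_one hgt.ne']
  ring_nf

theorem setLIntegral_compl_testRadial_le (hn : 0 < n) (hp : 1 < p) (hα : 0 < α)
    (hv' : ∀ᵐ x ∂(volume : Measure (Rn n)), 0 < v x)
    (hfin : ∀ r : ℝ, 0 < r →
      IntegrableOn (fun y => v y ^ (-(p / (p - 1)))) {y : Rn n | ‖y‖ < r})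
    (hgt : 0 < gfun n p v t) :
    ∫⁻ x in {x | ‖x‖ < t}ᶜ, ENNReal.ofReal (|testRadial n p α t v ‖x‖| ^ p)
        ∂dualWeightMeasure n p v ≤
      ENNReal.ofReal (gfun n p v t ^ (-(α * (p - 1))) / (α * (p - 1))) := by
  have hβ : 0 < α * (p - 1) := mul_pos hα (by linarith)
  rw [setLIntegral_congr_fun (measurableSet_lt measurable_norm measurable_const).compl
      fun x (hx : ¬ ‖x‖ < t) => by
        rw [testRadial, if_neg hx, abs_of_nonneg (Real.rpow_nonneg (gfun_nonneg hv' _) _),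
          ← Real.rpow_mul (gfun_nonneg hv' _), testExponent_mul hp]]
  exact setLIntegral_dualWeightMeasure_gfun_rpow_le hn hv' hfin hβ hgt

end TestFunction

theorem test_function_norm_bound_general (n : ℕ) (hn : 0 < n) (p : ℝ) (hp : 1 < p)
    (α : ℝ) (hα : α ∈ Ioo (0 : ℝ) 1) (t : ℝ)
    (v : Rn n → ℝ) (hv : Measurable v)
    (hv' : ∀ᵐ x ∂(volume : Measure (Rn n)), 0 < v x)
    (hfin : ∀ r : ℝ, 0 < r →
      IntegrableOn (fun y => v y ^ (-(p / (p - 1)))) {y : Rn n | ‖y‖ < r})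
    (hgt : 0 < gfun n p v t) :
    (∫⁻ x, ENNReal.ofReal (|testFun n p α t v x| * v x) ^ p) ^ (1 / p)
      ≤ ENNReal.ofReal
          ((((p / (p - 1) / (1 - α)) ^ p + 1 / (α * (p - 1))) ^ (1 / p)) *
            gfun n p v t ^ (-(α / (p / (p - 1))))) := by
  set c := gfun n p v t
  set C := p / (p - 1) / (1 - α)
  set β := α * (p - 1)
  have hβ : 0 < β := mul_pos hα.1 (by linarith)
  have hC : 0 < C := div_pos (div_pos (by linarith) (by linarith)) (by linarith [hα.2])
  rw [lintegral_testFun_eq hp hv hv',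
    ← lintegral_add_compl _ (measurableSet_lt measurable_norm measurable_const),
    setLIntegral_lt_testRadial hp hα.2 hv' hfin hgt]
  calc _ ≤ (ENNReal.ofReal (C ^ p * c ^ (-β)) + ENNReal.ofReal (c ^ (-β) / β)) ^ (1 / p) := by
        gcongr
        exact setLIntegral_compl_testRadial_le hn hp hα.1 hv' hfin hgt
    _ = ENNReal.ofReal ((C ^ p + 1 / β) ^ (1 / p) * c ^ (-(α / (p / (p - 1))))) := by
        rw [← ENNReal.ofReal_add (by positivity) (by positivity),
          ENNReal.ofReal_rpow_of_nonneg (by positivity) (by positivity)]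
        congr 1
        rw [show C ^ p * c ^ (-β) + c ^ (-β) / β = (C ^ p + 1 / β) * c ^ (-β) by ring,
          Real.mul_rpow (by positivity) (by positivity), ← Real.rpow_mul hgt.le]
        congr 2
        simp only [β]
        field_simp [(by linarith : p - 1 ≠ 0), (by linarith : p ≠ 0)]

/-- Let `1 < p < ∞`, `α ∈ (0,1)`, `t > 0`, and let `v` be a weight on `ℝⁿ` with
`g(r) = ∫_{|y|<r} v^{-p'}` finite for every `r > 0` and `g(t) > 0`.  Then the test
function `f` above satisfies
`‖f‖_{L_{p,v}} = (∫ (f v)^p)^{1/p} ≤ ((p'/(1-α))^p + 1/(α(p-1)))^{1/p} g(t)^{-α/p'}`. -/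
theorem test_function_norm_bound (n : ℕ) (hn : 0 < n) (p : ℝ) (hp : 1 < p)
    (α : ℝ) (hα : α ∈ Ioo (0 : ℝ) 1) (t : ℝ) (ht : 0 < t)
    (v : Rn n → ℝ) (hv : Measurable v)
    (hv' : ∀ᵐ x ∂(volume : Measure (Rn n)), 0 < v x)
    (hfin : ∀ r : ℝ, 0 < r →
      IntegrableOn (fun y => v y ^ (-(p / (p - 1)))) {y : Rn n | ‖y‖ < r})
    (hgt : 0 < gfun n p v t) :
    (∫⁻ x, ENNReal.ofReal (|testFun n p α t v x| * v x) ^ p) ^ (1 / p)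
      ≤ ENNReal.ofReal
          ((((p / (p - 1) / (1 - α)) ^ p + 1 / (α * (p - 1))) ^ (1 / p)) *
            gfun n p v t ^ (-(α / (p / (p - 1))))) :=
  test_function_norm_bound_general n hn p hp α hα t v hv hv' hfin hgt
end
end

section
/- Let 1 < p < ∞, α ∈ (0,1), t > 0, and let v be a weight on ℝⁿ with g(r) := ∫_{|y|<r} v(y)^{−p'} dy finite for every r > 0. Define f(x) := (p'/(1−α)) · g(t)^{−α/p' − 1/p} · v(x)^{−p'} for |x| < t, and f(x) := g(|x|)^{−α/p' − 1/p} · v(x)^{−p'} for |x| > t. Then for every x with |x| > t, the Hardy operator satisfies Hf(x) ≥ (p'/(1−α)) · g(|x|)^{(1−α)/p'}. -/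
open MeasureTheory Set ENNReal

noncomputable section

/-- The multidimensional Hardy operator `Hf(x) = ∫_{|y|<|x|} f(y) dy`. -/
def hardy (n : ℕ) (f : Rn n → ℝ) (x : Rn n) : ℝ :=
  ∫ y in {y : Rn n | ‖y‖ < ‖x‖}, f y
/-!
Write `γ = (1 - α) / p'` and `w = v ^ (-p')`, so `g(r) = ∫_{|y|<r} w`. The exponent of the test
function is `γ - 1`, and on the ball `|y| < t` the test function is the constant multiple of `w`
whose integral is `g(t)^γ / γ`. On the shell `t ≤ |y| < |x|` the integrand `g(|y|)^{γ-1} w(y)` is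
formally `d(g^γ / γ)`. To make this rigorous, cut the shell along a fine partition of `[t, |x|]`:
on each piece `g(|y|)^{γ-1}` is at least its value at the outer radius, while concavity of `s ↦ s^γ`
bounds the increment of `g^γ / γ` by the value at the inner radius times the increment of `g`.
The two bounds differ by at most `sup (increment of g) · (g(t)^{γ-1} - g(|x|)^{γ-1})`, which
tends to zero because `g` is continuous (spheres are null).
-/

theorem rpow_sub_rpow_le_mul_rpow_sub_one_mul_sub {γ c d : ℝ} (hγ₀ : 0 ≤ γ) (hγ₁ : γ ≤ 1)
    (hc : 0 < c) (hcd : c ≤ d) : d ^ γ - c ^ γ ≤ γ * c ^ (γ - 1) * (d - c) := by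
  rcases hcd.eq_or_lt with rfl | hcd
  · simp
  have hslope := (Real.concaveOn_rpow hγ₀ hγ₁).slope_le_of_hasDerivAt hc.le
    (hc.le.trans hcd.le) hcd (Real.hasDerivAt_rpow_const (Or.inl hc.ne'))
  rwa [slope_def_field, div_le_iff₀ (sub_pos.2 hcd)] at hslope

theorem rpow_sub_rpow_div_le_of_sub_le {γ c d ε : ℝ} (hγ₀ : 0 < γ) (hγ₁ : γ ≤ 1)
    (hc : 0 < c) (hcd : c ≤ d) (hdc : d - c ≤ ε) :
    (d ^ γ - c ^ γ) / γ ≤ d ^ (γ - 1) * (d - c) + ε * (c ^ (γ - 1) - d ^ (γ - 1)) := by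
  have htangent := rpow_sub_rpow_le_mul_rpow_sub_one_mul_sub hγ₀.le hγ₁ hc hcd
  have hanti : d ^ (γ - 1) ≤ c ^ (γ - 1) := Real.rpow_le_rpow_of_nonpos hc hcd (by linarith)
  rw [div_le_iff₀ hγ₀]
  nlinarith [mul_le_mul_of_nonneg_left hdc (sub_nonneg.2 hanti)]

theorem rpow_sub_rpow_div_le_sum {γ ε : ℝ} (hγ₀ : 0 < γ) (hγ₁ : γ ≤ 1) {u : ℕ → ℝ}
    (hu : Monotone u) (hu₀ : 0 < u 0) {N : ℕ} (hstep : ∀ k < N, u (k + 1) - u k ≤ ε) :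
    (u N ^ γ - u 0 ^ γ) / γ ≤ ∑ k ∈ Finset.range N, u (k + 1) ^ (γ - 1) * (u (k + 1) - u k)
      + ε * (u 0 ^ (γ - 1) - u N ^ (γ - 1)) := by
  rw [← Finset.sum_range_sub (fun k => u k ^ γ), ← Finset.sum_range_sub' (fun k => u k ^ (γ - 1)),
    Finset.sum_div, Finset.mul_sum, ← Finset.sum_add_distrib]
  refine Finset.sum_le_sum fun k hk => ?_
  exact rpow_sub_rpow_div_le_of_sub_le hγ₀ hγ₁ (hu₀.trans_le (hu (Nat.zero_le k))) (hu k.le_succ)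
    (hstep k (Finset.mem_range.1 hk))

theorem exists_uniform_partition_dist_lt {f : ℝ → ℝ} {a b ε : ℝ} (hab : a ≤ b)
    (hf : ContinuousOn f (Icc a b)) (hε : 0 < ε) :
    ∃ N : ℕ, 0 < N ∧ ∀ k < N,
      dist (f (a + (k + 1 : ℕ) * ((b - a) / N))) (f (a + k * ((b - a) / N))) < ε := by
  obtain ⟨δ, hδ, hf⟩ := Metric.uniformContinuousOn_iff.1
    (isCompact_Icc.uniformContinuousOn_of_continuous hf) ε hε
  obtain ⟨N, hN⟩ := exists_nat_gt ((b - a) / δ)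
  have hN₀ : (0 : ℝ) < N := (div_nonneg (sub_nonneg.2 hab) hδ.le).trans_lt hN
  have hmesh : (b - a) / N < δ := by
    rwa [div_lt_iff₀ hδ, mul_comm, ← div_lt_iff₀ hN₀] at hN
  have hh : 0 ≤ (b - a) / N := div_nonneg (sub_nonneg.2 hab) hN₀.le
  have hmem : ∀ k ≤ N, a + k * ((b - a) / N) ∈ Icc a b := fun k hk => by
    have hNh : (N : ℝ) * ((b - a) / N) = b - a := mul_div_cancel₀ _ hN₀.ne'
    constructor <;> nlinarith [(Nat.cast_le (α := ℝ)).2 hk, (Nat.cast_nonneg (α := ℝ) k)]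
  refine ⟨N, Nat.cast_pos.1 hN₀, fun k hk => hf _ (hmem _ hk) _ (hmem _ hk.le) ?_⟩
  rw [Real.dist_eq, Nat.cast_succ]
  convert (abs_of_nonneg hh).trans_lt hmesh using 2
  ring

section BallIntegral

variable {E : Type*} [NormedAddCommGroup E]

theorem setOf_norm_lt_subset {r s : ℝ} (h : r ≤ s) : {y : E | ‖y‖ < r} ⊆ {y : E | ‖y‖ < s} :=
  fun _ hy => lt_of_lt_of_le hy h

theorem setOf_norm_lt_eq_empty {r : ℝ} (hr : r ≤ 0) : {y : E | ‖y‖ < r} = ∅ :=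
  eq_empty_of_forall_notMem fun y hy => (norm_nonneg y).not_gt (hy.trans_le hr)

def shell (r s : ℝ) : Set E := {y | ‖y‖ < s} \ {y | ‖y‖ < r}

theorem shell_subset_shell {r r' s s' : ℝ} (hr : r ≤ r') (hs : s' ≤ s) :
    (shell r' s' : Set E) ⊆ shell r s :=
  sdiff_subset_sdiff (setOf_norm_lt_subset hs) (setOf_norm_lt_subset hr)

theorem shell_diff_shell {a b c : ℝ} (hab : a ≤ b) :
    (shell a c : Set E) \ shell a b = shell b c := by
  ext y
  simp only [shell, Set.mem_sdiff, mem_ofPred_eq, not_and, not_lt]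
  grind

variable [MeasurableSpace E] {μ : Measure E} {w : E → ℝ}

def ballIntegral (μ : Measure E) (w : E → ℝ) (r : ℝ) : ℝ :=
  ∫ y in {y : E | ‖y‖ < r}, w y ∂μ

theorem pos_of_ballIntegral_pos {r : ℝ} (h : 0 < ballIntegral μ w r) : 0 < r := by
  by_contra! hr
  simp [ballIntegral, setOf_norm_lt_eq_empty hr] at h

theorem ballIntegral_nonneg (hw : 0 ≤ᵐ[μ] w) (r : ℝ) : 0 ≤ ballIntegral μ w r :=
  setIntegral_nonneg_of_ae_restrict (ae_restrict_of_ae hw)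

theorem ballIntegral_monotone (hw : 0 ≤ᵐ[μ] w)
    (hint : ∀ r, 0 < r → IntegrableOn w {y : E | ‖y‖ < r} μ) : Monotone (ballIntegral μ w) := by
  intro r s hrs
  rcases le_or_gt r 0 with hr | hr
  · simpa [ballIntegral, setOf_norm_lt_eq_empty hr] using ballIntegral_nonneg hw s
  · exact setIntegral_mono_set (hint s (hr.trans_le hrs)) (ae_restrict_of_ae hw)
      (setOf_norm_lt_subset hrs).eventuallyLE

theorem ballIntegral_pos [μ.IsOpenPosMeasure] {r : ℝ} (hw : ∀ᵐ y ∂μ, 0 < w y)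
    (hint : IntegrableOn w {y : E | ‖y‖ < r} μ) (hr : 0 < r) : 0 < ballIntegral μ w r := by
  refine lt_of_le_of_ne (ballIntegral_nonneg (hw.mono fun _ => le_of_lt) r) fun h => ?_
  have hzero := (setIntegral_eq_zero_iff_of_nonneg_ae
    (ae_restrict_of_ae (hw.mono fun _ => le_of_lt)) hint).1 h.symm
  have hball : 0 < μ {y : E | ‖y‖ < r} :=
    (isOpen_lt continuous_norm continuous_const).measure_pos μ ⟨0, by simpa using hr⟩
  have hfalse : ∀ᵐ y ∂μ.restrict {y : E | ‖y‖ < r}, False := by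
    filter_upwards [hzero, ae_restrict_of_ae hw] with y hy0 hy
    exact hy.ne' hy0
  simp_all

variable [OpensMeasurableSpace E]

theorem measurableSet_setOf_norm_lt (r : ℝ) : MeasurableSet {y : E | ‖y‖ < r} :=
  measurableSet_lt measurable_norm measurable_const

theorem measurableSet_shell (r s : ℝ) : MeasurableSet (shell r s : Set E) :=
  (measurableSet_setOf_norm_lt s).diff (measurableSet_setOf_norm_lt r)

theorem ballIntegral_sub_ballIntegral {r s : ℝ} (hint : IntegrableOn w {y : E | ‖y‖ < s} μ)
    (hrs : r ≤ s) : ballIntegral μ w s - ballIntegral μ w r = ∫ y in shell r s, w y ∂μ :=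
  (setIntegral_sdiff (measurableSet_setOf_norm_lt r) hint (setOf_norm_lt_subset hrs)).symm

theorem continuousAt_ballIntegral [NormedSpace ℝ E] [FiniteDimensional ℝ E] [BorelSpace E]
    [μ.IsAddHaarMeasure] (hint : ∀ r, 0 < r → IntegrableOn w {y : E | ‖y‖ < r} μ)
    {r₀ : ℝ} (hr₀ : 0 < r₀) : ContinuousAt (ballIntegral μ w) r₀ := by
  have hindicator : ballIntegral μ w = fun r => ∫ y, {y : E | ‖y‖ < r}.indicator w y ∂μ := by
    ext r; exact (integral_indicator (measurableSet_setOf_norm_lt r)).symm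
  have hsphere : ∀ᵐ y ∂μ, ‖y‖ ≠ r₀ := by
    refine measure_mono_null (fun y hy => ?_) (μ.addHaar_sphere_of_ne_zero (0 : E) hr₀.ne')
    simpa using hy
  rw [hindicator]
  refine continuousAt_of_dominated (bound := fun y => ‖{y : E | ‖y‖ < r₀ + 1}.indicator w y‖)
    ?_ ?_ ((hint _ (by linarith)).integrable_indicator (measurableSet_setOf_norm_lt _)).norm ?_
  · filter_upwards [Ioi_mem_nhds hr₀] with r hr
    exact ((hint r hr).integrable_indicator (measurableSet_setOf_norm_lt r)).aestronglyMeasurable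
  · filter_upwards [Iio_mem_nhds (lt_add_one r₀)] with r hr
    refine ae_of_all _ fun y => ?_
    simp only [norm_indicator_eq_indicator_norm]
    exact indicator_le_indicator_of_subset (setOf_norm_lt_subset hr.le) (fun _ => norm_nonneg _) y
  · filter_upwards [hsphere] with y hy
    rcases hy.lt_or_gt with hy | hy
    · refine continuousAt_const.congr (f := fun _ => w y) ?_
      filter_upwards [Ioi_mem_nhds hy] with r hr
      exact (indicator_of_mem (show y ∈ {y : E | ‖y‖ < r} from hr) w).symm
    · refine continuousAt_const.congr (f := fun _ => 0) ?_
      filter_upwards [Iio_mem_nhds hy] with r hr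
      exact (indicator_of_notMem (show y ∉ {y : E | ‖y‖ < r} from
        lt_asymm (show r < ‖y‖ from hr)) w).symm

theorem setIntegral_setOf_norm_lt_eq_add_shell {f φ : E → ℝ} {c t R : ℝ} (htR : t ≤ R)
    (hwt : IntegrableOn w {y : E | ‖y‖ < t} μ) (hφ : IntegrableOn φ (shell t R) μ)
    (hball : EqOn f (fun y => c * w y) {y : E | ‖y‖ < t}) (hshell : EqOn f φ (shell t R)) :
    ∫ y in {y : E | ‖y‖ < R}, f y ∂μ = c * ballIntegral μ w t + ∫ y in shell t R, φ y ∂μ := by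
  have hunion : {y : E | ‖y‖ < R} = {y | ‖y‖ < t} ∪ shell t R :=
    (union_sdiff_cancel (setOf_norm_lt_subset htR)).symm
  have hdisj : Disjoint {y : E | ‖y‖ < t} (shell t R) := disjoint_sdiff_self_right
  rw [hunion, setIntegral_union hdisj
      (measurableSet_shell t R) (IntegrableOn.congr_fun (hwt.const_mul c) hball.symm
        (measurableSet_setOf_norm_lt t))
      (hφ.congr_fun hshell.symm (measurableSet_shell t R)),
    setIntegral_congr_fun (measurableSet_setOf_norm_lt t) hball,
    setIntegral_congr_fun (measurableSet_shell t R) hshell, integral_const_mul]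
  rfl

variable {γ : ℝ}

theorem integrableOn_shell_rpow_ballIntegral_mul (hw : 0 ≤ᵐ[μ] w)
    (hint : ∀ r, 0 < r → IntegrableOn w {y : E | ‖y‖ < r} μ) (hγ : γ ≤ 1) {r s : ℝ}
    (hr : 0 < ballIntegral μ w r) (hrs : r ≤ s) :
    IntegrableOn (fun y => ballIntegral μ w ‖y‖ ^ (γ - 1) * w y) (shell r s) μ := by
  have hmono := ballIntegral_monotone hw hint
  refine ((hint s ((pos_of_ballIntegral_pos hr).trans_le hrs)).mono_set sdiff_subset).bdd_mul
    (c := ballIntegral μ w r ^ (γ - 1))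
    ((hmono.measurable.comp measurable_norm).pow_const _).aestronglyMeasurable ?_
  filter_upwards [ae_restrict_mem (measurableSet_shell r s)] with y hy
  have hle : ballIntegral μ w r ≤ ballIntegral μ w ‖y‖ := hmono (not_lt.1 hy.2)
  rw [Real.norm_of_nonneg (Real.rpow_nonneg (hr.le.trans hle) _)]
  exact Real.rpow_le_rpow_of_nonpos hr hle (by linarith)

theorem rpow_mul_sub_le_setIntegral_shell (hw : 0 ≤ᵐ[μ] w)
    (hint : ∀ r, 0 < r → IntegrableOn w {y : E | ‖y‖ < r} μ) (hγ : γ ≤ 1) {r s : ℝ}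
    (hr : 0 < ballIntegral μ w r) (hrs : r ≤ s) :
    ballIntegral μ w s ^ (γ - 1) * (ballIntegral μ w s - ballIntegral μ w r)
      ≤ ∫ y in shell r s, ballIntegral μ w ‖y‖ ^ (γ - 1) * w y ∂μ := by
  have hmono := ballIntegral_monotone hw hint
  have hs := (pos_of_ballIntegral_pos hr).trans_le hrs
  rw [ballIntegral_sub_ballIntegral (hint s hs) hrs, ← integral_const_mul]
  refine setIntegral_mono_ae_restrict (((hint s hs).mono_set sdiff_subset).const_mul _)
    (integrableOn_shell_rpow_ballIntegral_mul hw hint hγ hr hrs) ?_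
  filter_upwards [ae_restrict_mem (measurableSet_shell r s), ae_restrict_of_ae hw] with y hy hwy
  have hle : ballIntegral μ w r ≤ ballIntegral μ w ‖y‖ := hmono (not_lt.1 hy.2)
  exact mul_le_mul_of_nonneg_right
    (Real.rpow_le_rpow_of_nonpos (hr.trans_le hle) (hmono hy.1.le) (by linarith)) hwy

theorem sum_rpow_mul_sub_le_setIntegral_shell (hw : 0 ≤ᵐ[μ] w)
    (hint : ∀ r, 0 < r → IntegrableOn w {y : E | ‖y‖ < r} μ) (hγ : γ ≤ 1) {r : ℕ → ℝ}
    (hr : Monotone r) (hr₀ : 0 < ballIntegral μ w (r 0)) (N : ℕ) :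
    ∑ k ∈ Finset.range N, ballIntegral μ w (r (k + 1)) ^ (γ - 1)
        * (ballIntegral μ w (r (k + 1)) - ballIntegral μ w (r k))
      ≤ ∫ y in shell (r 0) (r N), ballIntegral μ w ‖y‖ ^ (γ - 1) * w y ∂μ := by
  set φ := fun y => ballIntegral μ w ‖y‖ ^ (γ - 1) * w y
  have hG : ∀ k, 0 < ballIntegral μ w (r k) :=
    fun k => hr₀.trans_le (ballIntegral_monotone hw hint (hr (Nat.zero_le k)))
  have hslice : ∀ k, ∫ y in shell (r k) (r (k + 1)), φ y ∂μ
      = ∫ y in shell (r 0) (r (k + 1)), φ y ∂μ - ∫ y in shell (r 0) (r k), φ y ∂μ := fun k => by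
    rw [← shell_diff_shell (hr (Nat.zero_le k)), setIntegral_sdiff (measurableSet_shell _ _)
      (integrableOn_shell_rpow_ballIntegral_mul hw hint hγ hr₀ (hr (Nat.zero_le _)))
      (shell_subset_shell le_rfl (hr k.le_succ))]
  calc _ ≤ ∑ k ∈ Finset.range N, ∫ y in shell (r k) (r (k + 1)), φ y ∂μ :=
        Finset.sum_le_sum fun k _ => rpow_mul_sub_le_setIntegral_shell hw hint hγ (hG k) (hr k.le_succ)
    _ = ∫ y in shell (r 0) (r N), φ y ∂μ := by
        rw [Finset.sum_congr rfl fun k _ => hslice k,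
          Finset.sum_range_sub (fun k => ∫ y in shell (r 0) (r k), φ y ∂μ)]
        simp [shell]

theorem rpow_sub_rpow_div_le_setIntegral_shell (hw : 0 ≤ᵐ[μ] w)
    (hint : ∀ r, 0 < r → IntegrableOn w {y : E | ‖y‖ < r} μ) (hγ₀ : 0 < γ) (hγ₁ : γ ≤ 1)
    {t R : ℝ} (htR : t ≤ R) (hcont : ContinuousOn (ballIntegral μ w) (Icc t R))
    (ht : 0 < ballIntegral μ w t) :
    (ballIntegral μ w R ^ γ - ballIntegral μ w t ^ γ) / γ
      ≤ ∫ y in shell t R, ballIntegral μ w ‖y‖ ^ (γ - 1) * w y ∂μ := by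
  set G := ballIntegral μ w
  have hmono : Monotone G := ballIntegral_monotone hw hint
  set C := G t ^ (γ - 1) - G R ^ (γ - 1)
  have hC : 0 ≤ C := sub_nonneg.2 (Real.rpow_le_rpow_of_nonpos ht (hmono htR) (by linarith))
  refine le_of_forall_pos_le_add fun δ hδ => ?_
  obtain ⟨N, hN, hmesh⟩ := exists_uniform_partition_dist_lt htR hcont
    (show 0 < δ / (C + 1) by positivity)
  set r : ℕ → ℝ := fun k => t + k * ((R - t) / N)
  have hr : Monotone r := fun j k hjk => by
    have : (0 : ℝ) ≤ (R - t) / N := div_nonneg (sub_nonneg.2 htR) (Nat.cast_nonneg N)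
    simp only [r]; gcongr
  have hr₀ : r 0 = t := by simp [r]
  have hrN : r N = R := by
    simp only [r]; rw [mul_div_cancel₀ _ (Nat.cast_ne_zero.2 hN.ne')]; ring
  have hGr₀ : 0 < G (r 0) := hr₀ ▸ ht
  have hdisc := rpow_sub_rpow_div_le_sum hγ₀ hγ₁ (hmono.comp hr) hGr₀
    (N := N) (ε := δ / (C + 1)) fun k hk => (le_abs_self _).trans (hmesh k hk).le
  have hsum := sum_rpow_mul_sub_le_setIntegral_shell hw hint hγ₁ hr hGr₀ N
  simp only [Function.comp_apply, hr₀, hrN] at hdisc hsum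
  have hδC : δ / (C + 1) * C ≤ δ := by
    rw [div_mul_eq_mul_div, div_le_iff₀ (by positivity)]; nlinarith
  linarith

end BallIntegral

theorem hardy_on_test_function_general (n : ℕ) (p : ℝ) (hp : 1 < p)
    (α : ℝ) (hα : α ∈ Ioo (0 : ℝ) 1) (t : ℝ) (ht : 0 < t)
    (v : Rn n → ℝ)
    (hv' : ∀ᵐ x ∂(volume : Measure (Rn n)), 0 < v x)
    (hfin : ∀ r : ℝ, 0 < r →
      IntegrableOn (fun y => v y ^ (-(p / (p - 1)))) {y : Rn n | ‖y‖ < r}) :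
    ∀ x : Rn n, t < ‖x‖ →
      (p / (p - 1) / (1 - α)) * gfun n p v ‖x‖ ^ ((1 - α) / (p / (p - 1)))
        ≤ hardy n (testFun n p α t v) x := by
  intro x hx
  set w : Rn n → ℝ := fun y => v y ^ (-(p / (p - 1)))
  set G := ballIntegral volume w
  set γ := (1 - α) / (p / (p - 1))
  have hw : ∀ᵐ y ∂volume, 0 < w y := hv'.mono fun y hy => Real.rpow_pos_of_pos hy _
  have hw₀ : 0 ≤ᵐ[volume] w := hw.mono fun _ => le_of_lt
  have hp' : 1 < p / (p - 1) := (one_lt_div (by linarith)).2 (by linarith)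
  have hγ₀ : 0 < γ := div_pos (by linarith [hα.2]) (by linarith)
  have hγ₁ : γ ≤ 1 := (div_le_one (by linarith)).2 (by linarith [hα.1])
  have hexp : -(α / (p / (p - 1))) - 1 / p = γ - 1 := by
    simp only [γ]; field_simp; ring
  have hcoef : p / (p - 1) / (1 - α) = 1 / γ := (one_div_div _ _).symm
  have hGt : 0 < G t := ballIntegral_pos hw (hfin t ht) ht
  have hsplit := setIntegral_setOf_norm_lt_eq_add_shell (c := 1 / γ * G t ^ (γ - 1))
    (f := testFun n p α t v) hx.le (hfin t ht)
    (integrableOn_shell_rpow_ballIntegral_mul hw₀ hfin hγ₁ hGt hx.le)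
    (fun y hy => by rw [testFun, if_pos (show ‖y‖ < t from hy), hexp, hcoef]; rfl)
    (fun y hy => by rw [testFun, if_neg (show ¬‖y‖ < t from hy.2), hexp]; rfl)
  have hshell := rpow_sub_rpow_div_le_setIntegral_shell hw₀ hfin hγ₀ hγ₁
    hx.le (fun r hr => (continuousAt_ballIntegral hfin (ht.trans_le hr.1)).continuousWithinAt) hGt
  rw [hcoef, hardy, hsplit, mul_assoc, ← Real.rpow_add_one hGt.ne', sub_add_cancel]
  change 1 / γ * G ‖x‖ ^ γ ≤ _
  linarith [show 1 / γ * G ‖x‖ ^ γ - 1 / γ * G t ^ γ = (G ‖x‖ ^ γ - G t ^ γ) / γ by ring]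

/-- Let `1 < p < ∞`, `α ∈ (0,1)`, `t > 0`, and let `v` be a weight on `ℝⁿ` with
`g(r) = ∫_{|y|<r} v^{-p'}` finite for every `r > 0`.  Then for every `x` with
`|x| > t`, the Hardy operator applied to the test function `f` satisfies
`Hf(x) ≥ (p'/(1-α)) g(|x|)^{(1-α)/p'}`. -/
theorem hardy_on_test_function (n : ℕ) (hn : 0 < n) (p : ℝ) (hp : 1 < p)
    (α : ℝ) (hα : α ∈ Ioo (0 : ℝ) 1) (t : ℝ) (ht : 0 < t)
    (v : Rn n → ℝ) (hv : Measurable v)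
    (hv' : ∀ᵐ x ∂(volume : Measure (Rn n)), 0 < v x)
    (hfin : ∀ r : ℝ, 0 < r →
      IntegrableOn (fun y => v y ^ (-(p / (p - 1)))) {y : Rn n | ‖y‖ < r}) :
    ∀ x : Rn n, t < ‖x‖ →
      (p / (p - 1) / (1 - α)) * gfun n p v ‖x‖ ^ ((1 - α) / (p / (p - 1)))
        ≤ hardy n (testFun n p α t v) x :=
  hardy_on_test_function_general n p hp α hα t ht v hv' hfin
end
end
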